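/- Let G be a biextraspecial group with standard generators: let D₁ and D₂ be dents with standard bases {x₁,y₁} and {x₂,y₂} with respect to L = ⟨s,t⟩, and Z = ⟨a,b⟩ with a fixed by t. Then either [D₁,D₂] = 1, or the commutators are uniquely determined: [x₁,x₂] = a, [y₁,y₂] = b, and [x₁,y₂] = [y₁,x₂] = ab. -/

import Mathlib

open scoped commutatorElement

/-- The centre of the subgroup `Q`, viewed as a subgroup of the ambient group `G`. -/
def centerOf (G : Type*) [Group G] (Q : Subgroup G) : Subgroup G :=
  Subgroup.centralizer (Q : Set G) ⊓ Q

/-- A biextraspecial group of rank `m`: `G` is an extension of a special 2-group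
`Q` of order `2^(2+2m)` by `L₂(2) ≅ S₃`, the centre `Z = Z(Q) ≅ 2²` is the natural
module (elementary abelian of order 4 with faithful induced `G/Q`-action), `Q/Z` is
elementary abelian, and every element of order 3 acts fixed-point-freely on `Q`
(equivalently, `Q/Z` has only natural composition factors). -/
structure IsBiextraspecial (G : Type*) [Group G] (Q : Subgroup G) (m : ℕ) : Prop where
  normal : Q.Normal
  card_Q : Nat.card Q = 2 ^ (2 + 2 * m)
  quot_iso : Nonempty ((G ⧸ Q) ≃* Equiv.Perm (Fin 3))
  card_center : Nat.card (centerOf G Q) = 4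
  center_exponent : ∀ z ∈ centerOf G Q, z * z = 1
  center_faithful : ∀ g : G, (∀ z ∈ centerOf G Q, g * z * g⁻¹ = z) → g ∈ Q
  sq_mem_center : ∀ q ∈ Q, q * q ∈ centerOf G Q
  comm_mem_center : ∀ q ∈ Q, ∀ r ∈ Q, ⁅q, r⁆ ∈ centerOf G Q
  order_three_fpf : ∀ g : G, orderOf g = 3 → ∀ q ∈ Q, g * q * g⁻¹ = q → q = 1

/-- A dent: a normal subgroup `D` of `G` with `Z(Q) < D < Q` such that `D/Z` is an
irreducible `L`-submodule of `Q/Z` (i.e. `D` is minimal among normal subgroups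
strictly containing `Z(Q)`). -/
structure IsDent (G : Type*) [Group G] (Q D : Subgroup G) : Prop where
  normal : D.Normal
  center_lt : centerOf G Q < D
  lt_Q : D < Q
  minimal : ∀ E : Subgroup G, E.Normal → centerOf G Q < E → E ≤ D → E = D

/-- `D₃` is the diagonal dent of the distinct dents `D₁` and `D₂`: the unique third
dent contained in `D₁D₂`. -/
def IsDiagonal (G : Type*) [Group G] (Q D₁ D₂ D₃ : Subgroup G) : Prop :=
  IsDent G Q D₁ ∧ IsDent G Q D₂ ∧ IsDent G Q D₃ ∧
    D₁ ≠ D₂ ∧ D₃ ≠ D₁ ∧ D₃ ≠ D₂ ∧ D₃ ≤ D₁ ⊔ D₂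

/-- Two subgroups commute elementwise, i.e. `[D₁, D₂] = 1`. -/
def DentsCommute (G : Type*) [Group G] (D₁ D₂ : Subgroup G) : Prop :=
  ∀ d₁ ∈ D₁, ∀ d₂ ∈ D₂, d₁ * d₂ = d₂ * d₁

/-- A dent is singular when it is elementary abelian (of type `2⁴`). -/
def IsSingularDent (G : Type*) [Group G] (D : Subgroup G) : Prop :=
  ∀ d ∈ D, d * d = 1

/-- A standard basis `x, y` of a dent `D` with respect to `L = ⟨s, t⟩`:
`D = ⟨x, y, Z⟩` with `xᵗ = x`, `xˢ = y` and `yˢ = xy` (singular case) or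
`yˢ = x⁻¹y⁻¹` (non-singular case). -/
structure StdBasis (G : Type*) [Group G] (Q : Subgroup G) (s t : G)
    (D : Subgroup G) (x y : G) : Prop where
  x_mem : x ∈ D
  x_notin : x ∉ centerOf G Q
  gen : D = centerOf G Q ⊔ Subgroup.closure {x, y}
  t_fix : t * x * t⁻¹ = x
  s_x : s * x * s⁻¹ = y
  s_y : s * y * s⁻¹ = x * y ∨ s * y * s⁻¹ = x⁻¹ * y⁻¹

/-!
Commutators of `Q` are central of exponent 2, so the commutator map `Q × Q → Z` is bilinear and
symmetric, and it cannot tell `yˢ = xy` from `yˢ = x⁻¹y⁻¹`. Hence conjugation acts on the four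
values `c = ⁅x₁, x₂⁆`, `d = ⁅x₁, y₂⁆`, `e = ⁅y₁, x₂⁆`, `f = ⁅y₁, y₂⁆` by `cˢ = f`, `cᵗ = c`,
`dˢ = ef` and `fˢ = cdef`. On the natural module `Z`, the element `s` of order 3 permutes
`a ↦ b ↦ ab`, and `t`, which acts nontrivially because `L ∩ Q = 1` and `Q` contains the kernel of
the action, fixes only `1` and `a`. So `c ∈ {1, a}`, `fˢ = cdef` gives `e = d`, and `dˢ = df`
forces `d = 1` if `c = 1` and `d = ab` if `c = a`. In the first case the generators of `D₁` and
`D₂` commute, hence so do `D₁` and `D₂`.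
-/

section

open Subgroup

variable {G : Type*} [Group G]

theorem Subgroup.commute_of_mem_closure {A B : Set G} (h : ∀ u ∈ A, ∀ v ∈ B, Commute u v)
    {g k : G} (hg : g ∈ closure A) (hk : k ∈ closure B) : Commute g k := by
  have hle : closure A ≤ centralizer (closure B : Set G) := by
    rw [centralizer_closure, closure_le]
    exact fun u hu v hv => (h u hu v hv).symm.eq
  exact (mem_centralizer_iff.mp (hle hg) k hk).symm

section CenterOf

variable {Q : Subgroup G}

theorem centerOf_le : centerOf G Q ≤ Q := inf_le_right

theorem commute_of_mem_centerOf {z q : G} (hz : z ∈ centerOf G Q) (hq : q ∈ Q) :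
    Commute z q :=
  (mem_centralizer_iff.mp (mem_inf.mp hz).1 q hq).symm

theorem centerOf_normal (hQ : Q.Normal) : (centerOf G Q).Normal := by
  have := hQ
  exact normal_inf_normal _ _

theorem commutatorElement_mul_right_of_mem
    (hcomm : ∀ q ∈ Q, ∀ r ∈ Q, ⁅q, r⁆ ∈ centerOf G Q) {p q q' : G}
    (hp : p ∈ Q) (hq : q ∈ Q) (hq' : q' ∈ Q) : ⁅p, q * q'⁆ = ⁅p, q⁆ * ⁅p, q'⁆ := by
  rw [commutatorElement_mul_right_eq_mul_conj, mul_assoc _ q,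
    (commute_of_mem_centerOf (hcomm p hp q' hq') hq).symm.eq, ← mul_assoc, mul_inv_cancel_right]

theorem commutatorElement_comm_of_mem
    (hcomm : ∀ q ∈ Q, ∀ r ∈ Q, ⁅q, r⁆ ∈ centerOf G Q) (hexp : ∀ z ∈ centerOf G Q, z * z = 1)
    {p q : G} (hp : p ∈ Q) (hq : q ∈ Q) : ⁅p, q⁆ = ⁅q, p⁆ := by
  rw [← commutatorElement_inv, inv_eq_of_mul_eq_one_right (hexp _ (hcomm q hq p hp))]

theorem commutatorElement_inv_right_of_mem
    (hcomm : ∀ q ∈ Q, ∀ r ∈ Q, ⁅q, r⁆ ∈ centerOf G Q) (hexp : ∀ z ∈ centerOf G Q, z * z = 1)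
    {p q : G} (hp : p ∈ Q) (hq : q ∈ Q) : ⁅p, q⁻¹⁆ = ⁅p, q⁆ := by
  rw [commutatorElement_inv_right, (commute_of_mem_centerOf (hcomm q hq p hp) (inv_mem hq)).symm.eq,
    inv_mul_cancel_right, commutatorElement_comm_of_mem hcomm hexp hq hp]

theorem dentsCommute_of_commute {D₁ D₂ : Subgroup G} {x₁ y₁ x₂ y₂ : G}
    (hD₁ : D₁ = centerOf G Q ⊔ closure {x₁, y₁}) (hD₂ : D₂ = centerOf G Q ⊔ closure {x₂, y₂})
    (hx₁ : x₁ ∈ Q) (hy₁ : y₁ ∈ Q) (hx₂ : x₂ ∈ Q) (hy₂ : y₂ ∈ Q)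
    (hxx : Commute x₁ x₂) (hxy : Commute x₁ y₂) (hyx : Commute y₁ x₂) (hyy : Commute y₁ y₂) :
    DentsCommute G D₁ D₂ := by
  intro d₁ hd₁ d₂ hd₂
  rw [hD₁, ← closure_eq (centerOf G Q), ← Subgroup.closure_union] at hd₁
  rw [hD₂, ← closure_eq (centerOf G Q), ← Subgroup.closure_union] at hd₂
  refine (Subgroup.commute_of_mem_closure ?_ hd₁ hd₂).eq
  rintro u (hu | rfl | rfl) v (hv | rfl | rfl)
  · exact commute_of_mem_centerOf hu (centerOf_le hv)
  · exact commute_of_mem_centerOf hu hx₂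
  · exact commute_of_mem_centerOf hu hy₂
  · exact (commute_of_mem_centerOf hv hx₁).symm
  · exact hxx
  · exact hxy
  · exact (commute_of_mem_centerOf hv hy₁).symm
  · exact hyx
  · exact hyy

end CenterOf

section KleinFour

variable {a b : G}

theorem mul_comm_of_mul_self_eq_one (ha : a * a = 1) (hb : b * b = 1) (hab : a * b * (a * b) = 1) :
    a * b = b * a := by
  calc a * b = (a * b)⁻¹ := (inv_eq_of_mul_eq_one_right hab).symm
    _ = b * a := by
      rw [mul_inv_rev, inv_eq_of_mul_eq_one_right ha, inv_eq_of_mul_eq_one_right hb]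

theorem eq_one_or_eq_of_mem_closure_pair (hexp : ∀ z ∈ closure {a, b}, z * z = 1) {z : G}
    (hz : z ∈ closure {a, b}) : z = 1 ∨ z = a ∨ z = b ∨ z = a * b := by
  have ha : a ∈ closure {a, b} := subset_closure (by simp)
  have hb : b ∈ closure {a, b} := subset_closure (by simp)
  have haa (y : G) : a * (a * y) = y := by rw [← mul_assoc, hexp a ha, one_mul]
  have hba : b * a = a * b :=
    (mul_comm_of_mul_self_eq_one (hexp a ha) (hexp b hb) (hexp _ (mul_mem ha hb))).symm
  have hba' (y : G) : b * (a * y) = a * (b * y) := by rw [← mul_assoc, hba, mul_assoc]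
  induction hz using closure_induction with
  | mem x hx => rcases hx with rfl | rfl <;> simp
  | one => simp
  | mul x y _ _ ihx ihy =>
    rcases ihx with hx | hx | hx | hx <;> rcases ihy with hy | hy | hy | hy <;> rw [hx, hy] <;>
      simp [mul_assoc, hexp a ha, hexp b hb, haa, hba, hba']
  | inv x hx ihx => rwa [inv_eq_of_mul_eq_one_right (hexp x hx)]

theorem ne_of_card_closure_pair_eq_four (ha : a * a = 1) (hb : b * b = 1)
    (hcard : Nat.card (closure {a, b}) = 4) : a ≠ 1 ∧ b ≠ 1 ∧ a ≠ b := by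
  have card_ne (g : G) (hg : g * g = 1) : Nat.card (closure {g}) ≠ 4 := by
    rw [← zpowers_eq_closure, Nat.card_zpowers]
    intro h
    have := orderOf_dvd_of_pow_eq_one ((pow_two g).trans hg)
    rw [h] at this
    norm_num at this
  refine ⟨?_, ?_, ?_⟩ <;> rintro rfl
  · rw [closure_insert_one] at hcard
    exact card_ne b hb hcard
  · rw [Set.pair_comm, closure_insert_one] at hcard
    exact card_ne a ha hcard
  · rw [Set.pair_eq_singleton] at hcard
    exact card_ne a ha hcard

theorem conj_eq_mul_of_pow_three_eq_one (hexp : ∀ z ∈ closure {a, b}, z * z = 1) (hb : b ≠ 1)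
    (hab : a ≠ b) {s : G} (hs : s ^ 3 = 1) (hsa : s * a * s⁻¹ = b)
    (hsb : s * b * s⁻¹ ∈ closure {a, b}) : s * b * s⁻¹ = a * b := by
  rcases eq_one_or_eq_of_mem_closure_pair hexp hsb with h | h | h | h
  · exact absurd (conj_eq_one_iff.mp h) hb
  · refine absurd ?_ hab
    calc a = s ^ 3 * a * (s ^ 3)⁻¹ := by simp [hs]
      _ = s * (s * (s * a * s⁻¹) * s⁻¹) * s⁻¹ := by rw [pow_three]; group
      _ = b := by rw [hsa, h, hsa]
  · exact absurd (mul_left_cancel (mul_right_cancel (hsa.trans h.symm))) hab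
  · exact h

theorem conj_eq_mul_of_not_forall_conj_eq (hexp : ∀ z ∈ closure {a, b}, z * z = 1) (hb : b ≠ 1)
    (hab : a ≠ b) {t : G} (ht : ¬ ∀ z ∈ closure {a, b}, t * z * t⁻¹ = z)
    (hta : t * a * t⁻¹ = a) (htb : t * b * t⁻¹ ∈ closure {a, b}) : t * b * t⁻¹ = a * b := by
  rcases eq_one_or_eq_of_mem_closure_pair hexp htb with h | h | h | h
  · exact absurd (conj_eq_one_iff.mp h) hb
  · exact absurd (mul_left_cancel (mul_right_cancel (hta.trans h.symm))) hab
  · refine absurd (fun z hz => ?_) ht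
    refine MonoidHom.eqOn_closure (f := (MulAut.conj t).toMonoidHom) (g := MonoidHom.id G) ?_ hz
    rintro x (rfl | rfl) <;> simpa
  · exact h

end KleinFour

structure IsNaturalModuleBasis (Z : Subgroup G) (s t a b : G) : Prop where
  eq_closure : Z = closure {a, b}
  mul_self : ∀ z ∈ Z, z * z = 1
  a_ne_one : a ≠ 1
  b_ne_one : b ≠ 1
  a_ne_b : a ≠ b
  s_a : s * a * s⁻¹ = b
  s_b : s * b * s⁻¹ = a * b
  t_a : t * a * t⁻¹ = a
  t_b : t * b * t⁻¹ = a * b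

namespace IsNaturalModuleBasis

variable {Z : Subgroup G} {s t a b : G}

theorem of_card_eq_four (hZ : Z = closure {a, b}) (hexp : ∀ z ∈ Z, z * z = 1)
    (hcard : Nat.card Z = 4) (hZn : Z.Normal) (hs : s ^ 3 = 1)
    (ht : ¬ ∀ z ∈ Z, t * z * t⁻¹ = z) (hsa : s * a * s⁻¹ = b) (hta : t * a * t⁻¹ = a) :
    IsNaturalModuleBasis Z s t a b := by
  subst hZ
  have ha : a ∈ closure {a, b} := subset_closure (by simp)
  have hb : b ∈ closure {a, b} := subset_closure (by simp)
  obtain ⟨ha1, hb1, hab⟩ := ne_of_card_closure_pair_eq_four (hexp a ha) (hexp b hb) hcard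
  exact
    { eq_closure := rfl, mul_self := hexp, a_ne_one := ha1, b_ne_one := hb1, a_ne_b := hab,
      s_a := hsa, t_a := hta,
      s_b := conj_eq_mul_of_pow_three_eq_one hexp hb1 hab hs hsa (hZn.conj_mem b hb s),
      t_b := conj_eq_mul_of_not_forall_conj_eq hexp hb1 hab ht hta (hZn.conj_mem b hb t) }

theorem eq_of_mem (hZ : IsNaturalModuleBasis Z s t a b) {z : G} (hz : z ∈ Z) :
    z = 1 ∨ z = a ∨ z = b ∨ z = a * b :=
  eq_one_or_eq_of_mem_closure_pair (hZ.eq_closure ▸ hZ.mul_self) (hZ.eq_closure ▸ hz)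

theorem a_mem (hZ : IsNaturalModuleBasis Z s t a b) : a ∈ Z :=
  hZ.eq_closure ▸ subset_closure (by simp)

theorem b_mem (hZ : IsNaturalModuleBasis Z s t a b) : b ∈ Z :=
  hZ.eq_closure ▸ subset_closure (by simp)

theorem a_mul_a_mul (hZ : IsNaturalModuleBasis Z s t a b) (y : G) : a * (a * y) = y := by
  rw [← mul_assoc, hZ.mul_self a hZ.a_mem, one_mul]

theorem b_mul_a_mul_b (hZ : IsNaturalModuleBasis Z s t a b) : b * (a * b) = a := by
  have hab := mul_comm_of_mul_self_eq_one (hZ.mul_self a hZ.a_mem) (hZ.mul_self b hZ.b_mem)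
    (hZ.mul_self _ (mul_mem hZ.a_mem hZ.b_mem))
  rw [hab, ← mul_assoc, hZ.mul_self b hZ.b_mem, one_mul]

theorem eq_one_or_eq_of_t_conj_eq (hZ : IsNaturalModuleBasis Z s t a b) {z : G} (hz : z ∈ Z)
    (h : t * z * t⁻¹ = z) : z = 1 ∨ z = a := by
  rcases hZ.eq_of_mem hz with rfl | rfl | rfl | rfl
  · exact .inl rfl
  · exact .inr rfl
  · rw [hZ.t_b, mul_eq_right] at h
    exact absurd h hZ.a_ne_one
  · rw [← conj_mul, hZ.t_a, hZ.t_b, hZ.a_mul_a_mul, eq_comm, mul_eq_right] at h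
    exact absurd h hZ.a_ne_one

theorem eq_one_of_s_conj_eq (hZ : IsNaturalModuleBasis Z s t a b) {z : G} (hz : z ∈ Z)
    (h : s * z * s⁻¹ = z) : z = 1 := by
  rcases hZ.eq_of_mem hz with rfl | rfl | rfl | rfl
  · rfl
  · exact absurd (hZ.s_a ▸ h).symm hZ.a_ne_b
  · rw [hZ.s_b, mul_eq_right] at h
    exact absurd h hZ.a_ne_one
  · rw [← conj_mul, hZ.s_a, hZ.s_b, hZ.b_mul_a_mul_b, eq_comm, mul_eq_left] at h
    exact absurd h hZ.b_ne_one

theorem eq_of_s_conj_eq_mul (hZ : IsNaturalModuleBasis Z s t a b) {z : G} (hz : z ∈ Z)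
    (h : s * z * s⁻¹ = z * b) : z = a * b := by
  rcases hZ.eq_of_mem hz with rfl | rfl | rfl | rfl
  · exact absurd (by simpa using h.symm) hZ.b_ne_one
  · rw [hZ.s_a, eq_comm, mul_eq_right] at h
    exact absurd h hZ.a_ne_one
  · rw [hZ.s_b] at h
    exact absurd (mul_right_cancel h) hZ.a_ne_b
  · rfl

theorem commutator_table (hZ : IsNaturalModuleBasis Z s t a b) {c d e f : G} (hc : c ∈ Z)
    (hd : d ∈ Z) (hsc : s * c * s⁻¹ = f) (htc : t * c * t⁻¹ = c) (hsd : s * d * s⁻¹ = e * f)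
    (hsf : s * f * s⁻¹ = c * d * (e * f)) :
    (c = 1 ∧ d = 1 ∧ e = 1 ∧ f = 1) ∨ (c = a ∧ f = b ∧ d = a * b ∧ e = a * b) := by
  have he (h : d * e = 1) : e = d :=
    (eq_inv_of_mul_eq_one_right h).trans (inv_eq_of_mul_eq_one_right (hZ.mul_self d hd))
  rcases hZ.eq_one_or_eq_of_t_conj_eq hc htc with rfl | hca
  · obtain rfl : f = 1 := by rw [← hsc, conj_eq_one_iff]
    rw [he (by simpa using hsf.symm)] at hsd ⊢
    obtain rfl : d = 1 := hZ.eq_one_of_s_conj_eq hd (by simpa using hsd)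
    exact .inl ⟨rfl, rfl, rfl, rfl⟩
  · subst c
    rw [← hsc, hZ.s_a] at hsd hsf ⊢
    have hde : a * (d * e) * b = a * 1 * b := by
      rw [mul_one, ← hZ.s_b, hsf]
      group
    rw [he (mul_left_cancel (mul_right_cancel hde))] at hsd ⊢
    obtain rfl : d = a * b := hZ.eq_of_s_conj_eq_mul hd hsd
    exact .inr ⟨rfl, rfl, rfl, rfl⟩

end IsNaturalModuleBasis

namespace StdBasis

variable {Q D : Subgroup G} {s t x y : G}

theorem y_mem (hB : StdBasis G Q s t D x y) (hD : D.Normal) : y ∈ D :=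
  hB.s_x ▸ hD.conj_mem x hB.x_mem s

theorem commutatorElement_conj_s_y_right (hB : StdBasis G Q s t D x y)
    (hcomm : ∀ q ∈ Q, ∀ r ∈ Q, ⁅q, r⁆ ∈ centerOf G Q) (hexp : ∀ z ∈ centerOf G Q, z * z = 1)
    (hx : x ∈ Q) (hy : y ∈ Q) {w : G} (hw : w ∈ Q) : ⁅w, s * y * s⁻¹⁆ = ⁅w, x⁆ * ⁅w, y⁆ := by
  rcases hB.s_y with h | h <;> rw [h]
  · exact commutatorElement_mul_right_of_mem hcomm hw hx hy
  · rw [commutatorElement_mul_right_of_mem hcomm hw (inv_mem hx) (inv_mem hy),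
      commutatorElement_inv_right_of_mem hcomm hexp hw hx,
      commutatorElement_inv_right_of_mem hcomm hexp hw hy]

theorem commutatorElement_conj_s_y_left (hB : StdBasis G Q s t D x y) (hQ : Q.Normal)
    (hcomm : ∀ q ∈ Q, ∀ r ∈ Q, ⁅q, r⁆ ∈ centerOf G Q) (hexp : ∀ z ∈ centerOf G Q, z * z = 1)
    (hx : x ∈ Q) (hy : y ∈ Q) {w : G} (hw : w ∈ Q) : ⁅s * y * s⁻¹, w⁆ = ⁅x, w⁆ * ⁅y, w⁆ := by
  rw [commutatorElement_comm_of_mem hcomm hexp (hQ.conj_mem y hy s) hw,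
    hB.commutatorElement_conj_s_y_right hcomm hexp hx hy hw,
    commutatorElement_comm_of_mem hcomm hexp hw hx, commutatorElement_comm_of_mem hcomm hexp hw hy]

end StdBasis

end

theorem stmt5_general (G : Type*) [Group G] (Q L : Subgroup G) (m : ℕ)
    (hG : IsBiextraspecial G Q m) (hL : Q.IsComplement' L)
    (s t : G) (ht : t ∈ L) (hos : orderOf s = 3) (hot : orderOf t = 2)
    (a b : G)
    (hta : t * a * t⁻¹ = a) (hsa : s * a * s⁻¹ = b)
    (hZ : centerOf G Q = Subgroup.closure {a, b})
    (D₁ D₂ : Subgroup G) (x₁ y₁ x₂ y₂ : G)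
    (hD₁ : IsDent G Q D₁) (hD₂ : IsDent G Q D₂)
    (hB₁ : StdBasis G Q s t D₁ x₁ y₁) (hB₂ : StdBasis G Q s t D₂ x₂ y₂) :
    DentsCommute G D₁ D₂ ∨
      (⁅x₁, x₂⁆ = a ∧ ⁅y₁, y₂⁆ = b ∧ ⁅x₁, y₂⁆ = a * b ∧ ⁅y₁, x₂⁆ = a * b) := by
  have hcomm := hG.comm_mem_center
  have hexp := hG.center_exponent
  have ht_moves : ¬ ∀ z ∈ centerOf G Q, t * z * t⁻¹ = z := fun h => by
    have : t = 1 := Subgroup.disjoint_def.mp hL.disjoint (hG.center_faithful t h) ht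
    simp [this] at hot
  have hZ' := IsNaturalModuleBasis.of_card_eq_four hZ hexp hG.card_center
    (centerOf_normal hG.normal) (hos ▸ pow_orderOf_eq_one s) ht_moves hsa hta
  have hx₁ : x₁ ∈ Q := hD₁.lt_Q.le hB₁.x_mem
  have hy₁ : y₁ ∈ Q := hD₁.lt_Q.le (hB₁.y_mem hD₁.normal)
  have hx₂ : x₂ ∈ Q := hD₂.lt_Q.le hB₂.x_mem
  have hy₂ : y₂ ∈ Q := hD₂.lt_Q.le (hB₂.y_mem hD₂.normal)
  rcases hZ'.commutator_table (hcomm _ hx₁ _ hx₂) (hcomm _ hx₁ _ hy₂)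
      (by rw [conjugate_commutatorElement, hB₁.s_x, hB₂.s_x])
      (by rw [conjugate_commutatorElement, hB₁.t_fix, hB₂.t_fix])
      (by rw [conjugate_commutatorElement, hB₁.s_x,
        hB₂.commutatorElement_conj_s_y_right hcomm hexp hx₂ hy₂ hy₁])
      (by rw [conjugate_commutatorElement,
        hB₁.commutatorElement_conj_s_y_left hG.normal hcomm hexp hx₁ hy₁
          (hG.normal.conj_mem _ hy₂ s),
        hB₂.commutatorElement_conj_s_y_right hcomm hexp hx₂ hy₂ hx₁,
        hB₂.commutatorElement_conj_s_y_right hcomm hexp hx₂ hy₂ hy₁])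
    with ⟨hxx, hxy, hyx, hyy⟩ | htable
  · simp only [commutatorElement_eq_one_iff_commute] at hxx hxy hyx hyy
    exact .inl (dentsCommute_of_commute hB₁.gen hB₂.gen hx₁ hy₁ hx₂ hy₂ hxx hxy hyx hyy)
  · exact .inr htable

/-- two dents with standard bases either commute or have the uniquely
determined commutator table `[x₁,x₂] = a`, `[y₁,y₂] = b`, `[x₁,y₂] = [y₁,x₂] = ab`. -/
theorem stmt5 (G : Type*) [Group G] (Q L : Subgroup G) (m : ℕ)
    (hG : IsBiextraspecial G Q m) (hL : Q.IsComplement' L)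
    (s t : G) (hs : s ∈ L) (ht : t ∈ L) (hos : orderOf s = 3) (hot : orderOf t = 2)
    (a b : G) (ha : a ∈ centerOf G Q) (ha1 : a ≠ 1)
    (hta : t * a * t⁻¹ = a) (hsa : s * a * s⁻¹ = b)
    (hZ : centerOf G Q = Subgroup.closure {a, b})
    (D₁ D₂ : Subgroup G) (x₁ y₁ x₂ y₂ : G)
    (hD₁ : IsDent G Q D₁) (hD₂ : IsDent G Q D₂)
    (hB₁ : StdBasis G Q s t D₁ x₁ y₁) (hB₂ : StdBasis G Q s t D₂ x₂ y₂) :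
    DentsCommute G D₁ D₂ ∨
      (⁅x₁, x₂⁆ = a ∧ ⁅y₁, y₂⁆ = b ∧ ⁅x₁, y₂⁆ = a * b ∧ ⁅y₁, x₂⁆ = a * b) :=
  stmt5_general G Q L m hG hL s t ht hos hot a b hta hsa hZ D₁ D₂ x₁ y₁ x₂ y₂ hD₁ hD₂ hB₁ hB₂
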